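/- arXiv:1410.6387 — 9 statements merged into one kernel-verified Lean document; each statement's English description precedes it below -/
import Mathlib

section
/- Let C_0, …, C_{p−1} be d×d complex matrices that are simultaneously triangularizable, i.e. there exists an invertible d×d matrix Q such that T_k := Q^{-1} C_k Q is upper triangular for every k = 0, …, p−1. Let M be the companion block matrix of C_0, …, C_{p−1}. Then for every λ ∈ ℂ, det(M − λ·I_{pd}) = (−1)^{pd} · ∏_{j=1}^d ( λ^p − ∑_{k=0}^{p−1} λ^k · (T_k)_{jj} ). -/
/-- The companion block matrix of `d×d` matrices `C 0, …, C (p-1)`: the `pd×pd`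
block matrix with identity blocks `I_d` on the block superdiagonal, bottom block
row `(C 0, C 1, …, C (p-1))`, and zero blocks elsewhere. -/
def companion {p d : ℕ} {R : Type*} [CommRing R]
    (C : Fin p → Matrix (Fin d) (Fin d) R) :
    Matrix (Fin p × Fin d) (Fin p × Fin d) R :=
  Matrix.of fun x y =>
    if (x.1 : ℕ) + 1 = p then (C y.1) x.2 y.2
    else if (y.1 : ℕ) = (x.1 : ℕ) + 1 then (if x.2 = y.2 then 1 else 0) else 0

/-!
Write `M` for the companion matrix and `P(λ) = λ^p I - ∑ₖ λ^k C_k`. Since `λ - M` sends the block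
vector `(y, λy, …, λ^(p-1) y)` to `(0, …, 0, P(λ) y)`, right multiplication by a unipotent matrix
turns the first block column of `λ - M` into `(0, …, 0, P(λ))`. Rotating the block columns by one
step then gives a block lower triangular matrix with diagonal blocks `-I, …, -I, P(λ)`; the sign
`(-1)^((p-1)d)` of the rotation cancels that of the `-I` blocks, so `det (λ - M) = det P(λ)` over
any commutative ring.
Conjugating by `Q` does not change `det P(λ)` and makes it upper triangular.
-/

open Matrix Finset

namespace Matrix

variable {R α ι : Type*} [CommRing R] [Fintype α] [LinearOrder α] [Fintype ι] [DecidableEq ι]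

theorem det_eq_prod_det_diagBlock_of_lower (A : Matrix (α × ι) (α × ι) R)
    (hA : ∀ x y, x.1 < y.1 → A x y = 0) :
    A.det = ∏ k, (A.submatrix (Prod.mk k) (Prod.mk k)).det := by
  have hblock : BlockTriangular A (fun x => OrderDual.toDual x.1) := fun x y h => hA x y h
  rw [hblock.det_fintype]
  refine (Fintype.prod_equiv OrderDual.toDual _ _ fun k => ?_).symm
  let e : ι ≃ {x : α × ι // OrderDual.toDual x.1 = OrderDual.toDual k} :=
    { toFun := fun a => ⟨(k, a), rfl⟩
      invFun := fun x => x.1.2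
      left_inv := fun _ => rfl
      right_inv := fun x => Subtype.ext (Prod.ext x.2.symm rfl) }
  rw [← det_submatrix_equiv_self e (A.toSquareBlock _ _)]
  rfl

end Matrix

section Companion

variable {R : Type*} [CommRing R]

def monicMatrixPoly {p : ℕ} {ι : Type*} [Fintype ι] [DecidableEq ι]
    (C : Fin p → Matrix ι ι R) (lam : R) : Matrix ι ι R :=
  lam ^ p • 1 - ∑ k : Fin p, lam ^ (k : ℕ) • C k

def powerColumnOp {p : ℕ} {ι : Type*} [DecidableEq ι] (lam : R) :
    Matrix (Fin p × ι) (Fin p × ι) R :=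
  of fun x y => if (y.1 : ℕ) = 0 then (if x.2 = y.2 then lam ^ (x.1 : ℕ) else 0)
    else if x = y then 1 else 0

theorem det_powerColumnOp {p : ℕ} {ι : Type*} [Fintype ι] [DecidableEq ι] (lam : R) :
    (powerColumnOp lam : Matrix (Fin p × ι) (Fin p × ι) R).det = 1 := by
  rw [det_eq_prod_det_diagBlock_of_lower]
  · refine prod_eq_one fun k _ => ?_
    rw [← det_one (n := ι) (R := R)]
    congr 1
    ext a b
    by_cases hk : (k : ℕ) = 0 <;> simp [powerColumnOp, one_apply, hk]
  · intro x y h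
    have hy : (y.1 : ℕ) ≠ 0 := by omega
    simp only [powerColumnOp, of_apply, hy, if_false]
    exact if_neg fun e => h.ne (congrArg Prod.fst e)

theorem sign_prodCongrLeft_finRotate (n : ℕ) (ι : Type*) [Fintype ι] [DecidableEq ι] :
    (Equiv.Perm.sign (Equiv.prodCongrLeft fun _ : ι => finRotate (n + 1)) : R) =
      (-1) ^ (n * Fintype.card ι) := by
  simp [Equiv.Perm.sign_prodCongrLeft, sign_finRotate, pow_mul]

variable {n d : ℕ} (C : Fin (n + 1) → Matrix (Fin d) (Fin d) R) (lam : R)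

theorem smul_one_sub_companion_mul_powerColumnOp_apply_zero (x : Fin (n + 1) × Fin d)
    (b : Fin d) :
    ((lam • 1 - companion C) * (powerColumnOp lam : Matrix (Fin (n + 1) × Fin d) _ R)) x (0, b) =
      if x.1 = Fin.last n then monicMatrixPoly C lam x.2 b else 0 := by
  obtain ⟨i, a⟩ := x
  simp only [mul_apply, Fintype.sum_prod_type, powerColumnOp, of_apply, Fin.val_zero, if_true,
    mul_ite, mul_zero, sum_ite_eq', mem_univ]
  have hlam : ∑ k : Fin (n + 1), (if (i, a) = (k, b) then lam else 0) * lam ^ (k : ℕ) =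
      if a = b then lam ^ ((i : ℕ) + 1) else 0 := by
    simp [Prod.ext_iff, ite_and, pow_succ']
  simp only [Matrix.sub_apply, Matrix.smul_apply, one_apply, smul_eq_mul, mul_ite, mul_one,
    mul_zero, sub_mul, sum_sub_distrib, hlam]
  by_cases hi : i = Fin.last n
  · subst hi
    simp [companion, monicMatrixPoly, one_apply, Matrix.sum_apply, mul_comm]
  · have hin : (i : ℕ) ≠ n := fun h => hi (Fin.ext h)
    simp only [companion, of_apply, add_left_inj, hin, if_false, ite_mul, one_mul, zero_mul]
    rw [sum_eq_single ⟨i + 1, by omega⟩ (fun k _ hk => if_neg fun h => hk (Fin.ext h)) (by simp)]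
    simp [hi]

theorem smul_one_sub_companion_mul_powerColumnOp_apply_of_ne_zero (x y : Fin (n + 1) × Fin d)
    (hy : y.1 ≠ 0) :
    ((lam • 1 - companion C) * (powerColumnOp lam : Matrix (Fin (n + 1) × Fin d) _ R)) x y =
      (lam • 1 - companion C) x y := by
  simp [mul_apply, powerColumnOp, hy]

def companionReduction : Matrix (Fin (n + 1) × Fin d) (Fin (n + 1) × Fin d) R :=
  ((lam • 1 - companion C) * powerColumnOp lam).submatrix id
    (Equiv.prodCongrLeft fun _ => finRotate (n + 1))

theorem det_companionReduction :
    (companionReduction C lam).det = (-1) ^ (n * d) * (lam • 1 - companion C).det := by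
  rw [companionReduction, det_permute', sign_prodCongrLeft_finRotate, Fintype.card_fin, det_mul,
    det_powerColumnOp, mul_one]

theorem companionReduction_apply_of_fst_lt :
    ∀ x y : Fin (n + 1) × Fin d, x.1 < y.1 → companionReduction C lam x y = 0 := by
  rintro ⟨i, a⟩ ⟨j, b⟩ (hxy : i < j)
  simp only [companionReduction, submatrix_apply, id, Equiv.prodCongrLeft_apply]
  by_cases hj : j = Fin.last n
  · rw [hj, finRotate_last, smul_one_sub_companion_mul_powerColumnOp_apply_zero,
      if_neg (hj ▸ hxy).ne]
  · obtain ⟨r, hr⟩ : ∃ r, finRotate (n + 1) j = r := ⟨_, rfl⟩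
    have hrot : (r : ℕ) = j + 1 := hr ▸ coe_finRotate_of_ne_last hj
    have hij : (i : ℕ) < j := hxy
    have hj' : (j : ℕ) < n + 1 := j.isLt
    rw [hr, smul_one_sub_companion_mul_powerColumnOp_apply_of_ne_zero C lam _ (r, b)
      (by rintro rfl; simp at hrot)]
    simp only [Matrix.sub_apply, Matrix.smul_apply, one_apply, companion, of_apply,
      Prod.ext_iff, Fin.ext_iff, hrot]
    rw [if_neg (by omega), if_neg (by omega), if_neg (by omega)]
    simp

theorem companionReduction_diagBlock_castSucc (j : Fin n) :
    (companionReduction C lam).submatrix (Prod.mk j.castSucc) (Prod.mk j.castSucc) = -1 := by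
  ext a b
  have hrot : finRotate (n + 1) j.castSucc = j.succ := Fin.ext (by simp)
  simp only [companionReduction, submatrix_apply, id, Equiv.prodCongrLeft_apply, hrot,
    smul_one_sub_companion_mul_powerColumnOp_apply_of_ne_zero C lam _ (j.succ, b)
      (Fin.succ_ne_zero j)]
  simp [companion, j.isLt.ne, one_apply, (Fin.castSucc_lt_succ (i := j)).ne]

theorem companionReduction_diagBlock_last :
    (companionReduction C lam).submatrix (Prod.mk (Fin.last n)) (Prod.mk (Fin.last n)) =
      monicMatrixPoly C lam := by
  ext a b
  simp [companionReduction, smul_one_sub_companion_mul_powerColumnOp_apply_zero]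

theorem det_smul_one_sub_companion_of_succ :
    (lam • 1 - companion C).det = (monicMatrixPoly C lam).det := by
  have hblocks : (companionReduction C lam).det = (-1) ^ (n * d) * (monicMatrixPoly C lam).det := by
    rw [det_eq_prod_det_diagBlock_of_lower _ (companionReduction_apply_of_fst_lt C lam),
      Fin.prod_univ_castSucc]
    simp [companionReduction_diagBlock_castSucc, companionReduction_diagBlock_last, det_neg,
      ← pow_mul, mul_comm]
  rw [det_companionReduction] at hblocks
  exact ((isUnit_neg_one (α := R)).pow _).mul_left_cancel hblocks

theorem det_smul_one_sub_companion {p d : ℕ} (C : Fin p → Matrix (Fin d) (Fin d) R) (lam : R) :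
    (lam • 1 - companion C).det = (monicMatrixPoly C lam).det := by
  cases p with
  | zero => simp [monicMatrixPoly]
  | succ n => exact det_smul_one_sub_companion_of_succ C lam

theorem inv_mul_monicMatrixPoly_mul {p : ℕ} {ι : Type*} [Fintype ι] [DecidableEq ι]
    (C : Fin p → Matrix ι ι R) (Q : Matrix ι ι R) (hQ : Q⁻¹ * Q = 1) (lam : R) :
    Q⁻¹ * monicMatrixPoly C lam * Q = monicMatrixPoly (fun k => Q⁻¹ * C k * Q) lam := by
  simp [monicMatrixPoly, Matrix.mul_sub, Matrix.sub_mul, Finset.mul_sum, Finset.sum_mul, hQ]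

theorem det_monicMatrixPoly_of_upperTriangular {p : ℕ} {ι : Type*} [Fintype ι] [DecidableEq ι]
    [LinearOrder ι] (C : Fin p → Matrix ι ι R) (hC : ∀ k, (C k).IsUpperTriangular) (lam : R) :
    (monicMatrixPoly C lam).det = ∏ j, (lam ^ p - ∑ k : Fin p, lam ^ (k : ℕ) * C k j j) := by
  rw [det_of_isUpperTriangular]
  · simp [monicMatrixPoly, Matrix.sum_apply]
  · intro i j (hji : j < i)
    simp [monicMatrixPoly, Matrix.sum_apply, one_apply_ne hji.ne', fun k => hC k hji]

end Companion

theorem stmt_5 {p d : ℕ} (C : Fin p → Matrix (Fin d) (Fin d) ℂ)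
    (Q : Matrix (Fin d) (Fin d) ℂ) (hQ : IsUnit Q)
    (hupper : ∀ k : Fin p, ∀ i j : Fin d, j < i → (Q⁻¹ * C k * Q) i j = 0)
    (lam : ℂ) :
    (companion C - lam • 1).det =
      (-1 : ℂ) ^ (p * d) *
        ∏ j : Fin d,
          (lam ^ p - ∑ k : Fin p, lam ^ (k : ℕ) * (Q⁻¹ * C k * Q) j j) := by
  have hQinv : Q⁻¹ * Q = 1 := nonsing_inv_mul Q ((isUnit_iff_isUnit_det Q).mp hQ)
  rw [← neg_sub, det_neg, Fintype.card_prod, Fintype.card_fin, Fintype.card_fin,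
    det_smul_one_sub_companion, ← det_conj' hQ, inv_mul_monicMatrixPoly_mul C Q hQinv,
    det_monicMatrixPoly_of_upperTriangular (fun k => Q⁻¹ * C k * Q) fun k _ _ => hupper k _ _]
end

section
/- Let C_0, …, C_{p−1} be d×d complex matrices that are simultaneously triangularizable, i.e. there exists an invertible d×d matrix Q such that T_k := Q^{-1} C_k Q is upper triangular for every k = 0, …, p−1, and let M be the companion block matrix of C_0, …, C_{p−1}. Then the set of complex eigenvalues of M equals the union over j = 1, …, d of the sets of complex roots of the polynomials λ^p − ∑_{k=0}^{p−1} λ^k · (T_k)_{jj}. -/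
open Matrix

section CommRing

variable {R : Type*} [CommRing R] {p d : ℕ} (C : Fin p → Matrix (Fin d) (Fin d) R)

lemma companion_mulVec_apply_of_lt (v : Fin p × Fin d → R) {k : Fin p} (hk : (k : ℕ) + 1 < p)
    (i : Fin d) : (companion C *ᵥ v) (k, i) = v (⟨k + 1, hk⟩, i) := by
  rw [mulVec, dotProduct, Finset.sum_eq_single (⟨k + 1, hk⟩, i)]
  · simp [companion, hk.ne]
  · rintro ⟨k', j⟩ - hne
    simp only [companion, of_apply, if_neg hk.ne]
    split_ifs with h1 h2 <;> simp_all [Fin.ext_iff]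
  · simp

lemma companion_mulVec_apply_of_eq (v : Fin p × Fin d → R) {k : Fin p} (hk : (k : ℕ) + 1 = p)
    (i : Fin d) : (companion C *ᵥ v) (k, i) = ∑ k', (C k' *ᵥ fun j => v (k', j)) i := by
  simp [mulVec, dotProduct, companion, hk, Fintype.sum_prod_type]

variable {C}

lemma companion_mulVec_eq_smul_iff_of_geometric (hp : 0 < p) (lam : R) (w : Fin d → R) :
    companion C *ᵥ (fun x => lam ^ (x.1 : ℕ) * w x.2) = lam • (fun x => lam ^ (x.1 : ℕ) * w x.2) ↔
      (∑ k : Fin p, lam ^ (k : ℕ) • C k) *ᵥ w = lam ^ p • w := by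
  have hlast : ∀ k : Fin p, (k : ℕ) + 1 = p → ∀ i,
      (companion C *ᵥ fun x => lam ^ (x.1 : ℕ) * w x.2) (k, i) =
        ((∑ k : Fin p, lam ^ (k : ℕ) • C k) *ᵥ w) i := fun k hk i => by
    simp only [companion_mulVec_apply_of_eq C _ hk, sum_mulVec, Finset.sum_apply, smul_mulVec]
    exact Finset.sum_congr rfl fun k' _ => congrFun (mulVec_smul (C k') (lam ^ (k' : ℕ)) w) i
  constructor
  · intro h
    ext i
    have hk : ((⟨p - 1, by omega⟩ : Fin p) : ℕ) + 1 = p := Nat.sub_add_cancel hp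
    rw [← hlast _ hk, h, Pi.smul_apply, smul_eq_mul, Pi.smul_apply, smul_eq_mul, ← mul_assoc,
      ← pow_succ', hk]
  · intro h
    ext ⟨k, i⟩
    rw [Pi.smul_apply, smul_eq_mul, ← mul_assoc, ← pow_succ']
    obtain hk | hk : (k : ℕ) + 1 < p ∨ (k : ℕ) + 1 = p := by omega
    · rw [companion_mulVec_apply_of_lt C _ hk]
    · rw [hlast k hk, h, hk, Pi.smul_apply, smul_eq_mul]

lemma eq_pow_mul_of_companion_mulVec_eq_smul {lam : R} {v : Fin p × Fin d → R}
    (hv : companion C *ᵥ v = lam • v) (k : Fin p) (i : Fin d) :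
    v (k, i) = lam ^ (k : ℕ) * v (⟨0, k.pos⟩, i) := by
  obtain ⟨n, hn⟩ := k
  induction n with
  | zero => simp
  | succ n ih =>
    have hstep := congrFun hv (⟨n, by omega⟩, i)
    rw [companion_mulVec_apply_of_lt C v hn] at hstep
    rw [hstep, Pi.smul_apply, smul_eq_mul, ih (by omega), pow_succ']
    ring

lemma exists_companion_mulVec_eq_smul_iff (lam : R) :
    (∃ v ≠ 0, companion C *ᵥ v = lam • v) ↔
      ∃ w ≠ 0, (∑ k : Fin p, lam ^ (k : ℕ) • C k) *ᵥ w = lam ^ p • w := by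
  rcases Nat.eq_zero_or_pos p with rfl | hp
  · simp [eq_comm, Subsingleton.elim _ (0 : Fin 0 × Fin d → R)]
  constructor
  · rintro ⟨v, hv0, hv⟩
    have hgeom : v = fun x => lam ^ (x.1 : ℕ) * v (⟨0, hp⟩, x.2) :=
      funext fun x => eq_pow_mul_of_companion_mulVec_eq_smul hv x.1 x.2
    refine ⟨fun i => v (⟨0, hp⟩, i), fun hw => hv0 ?_, ?_⟩
    · rw [hgeom]
      ext x
      simp [show v (⟨0, hp⟩, x.2) = 0 from congrFun hw x.2]
    · rw [← companion_mulVec_eq_smul_iff_of_geometric hp, ← hgeom]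
      exact hv
  · rintro ⟨w, hw0, hw⟩
    refine ⟨fun x => lam ^ (x.1 : ℕ) * w x.2, fun hv => hw0 ?_,
      (companion_mulVec_eq_smul_iff_of_geometric hp lam w).2 hw⟩
    ext i
    simpa using congrFun hv (⟨0, hp⟩, i)

lemma det_smul_one_sub_sum_conj {n ι : Type*} [Fintype n] [DecidableEq n] [Fintype ι]
    {Q : Matrix n n R} (hQ : IsUnit Q) (a : R) (b : ι → R) (A : ι → Matrix n n R) :
    (a • 1 - ∑ k, b k • (Q⁻¹ * A k * Q)).det = (a • 1 - ∑ k, b k • A k).det := by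
  have hQinv : Q⁻¹ * Q = 1 := nonsing_inv_mul Q ((isUnit_iff_isUnit_det Q).mp hQ)
  rw [← det_conj' hQ (a • 1 - ∑ k, b k • A k)]
  simp [mul_sub, sub_mul, Finset.mul_sum, Finset.sum_mul, hQinv, Matrix.mul_assoc]

lemma det_smul_one_sub_sum_of_isUpperTriangular {n ι : Type*} [Fintype n] [DecidableEq n]
    [LinearOrder n] [Fintype ι] {T : ι → Matrix n n R} (hT : ∀ k, (T k).IsUpperTriangular)
    (a : R) (b : ι → R) :
    (a • 1 - ∑ k, b k • T k).det = ∏ i, (a - ∑ k, b k * T k i i) := by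
  rw [det_of_isUpperTriangular]
  · simp [Matrix.sum_apply]
  · intro i j (hij : j < i)
    simp [Matrix.sum_apply, fun k => hT k hij, one_apply_ne hij.ne']

end CommRing

lemma mem_spectrum_companion_iff {K : Type*} [Field K] {p d : ℕ}
    (C : Fin p → Matrix (Fin d) (Fin d) K) (lam : K) :
    lam ∈ spectrum K (companion C) ↔ (lam ^ p • 1 - ∑ k : Fin p, lam ^ (k : ℕ) • C k).det = 0 := by
  rw [spectrum.mem_iff, isUnit_iff_isUnit_det, isUnit_iff_ne_zero, not_not,
    ← exists_mulVec_eq_zero_iff, ← exists_mulVec_eq_zero_iff]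
  simp only [sub_mulVec, Algebra.algebraMap_eq_smul_one, smul_mulVec, one_mulVec, sub_eq_zero]
  simpa only [eq_comm] using exists_companion_mulVec_eq_smul_iff (C := C) lam

theorem stmt_6 {p d : ℕ} (C : Fin p → Matrix (Fin d) (Fin d) ℂ)
    (Q : Matrix (Fin d) (Fin d) ℂ) (hQ : IsUnit Q)
    (hupper : ∀ k : Fin p, ∀ i j : Fin d, j < i → (Q⁻¹ * C k * Q) i j = 0) :
    spectrum ℂ (companion C) =
      ⋃ j : Fin d,
        {lam : ℂ | lam ^ p - ∑ k : Fin p, lam ^ (k : ℕ) * (Q⁻¹ * C k * Q) j j = 0} := by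
  ext lam
  rw [mem_spectrum_companion_iff, ← det_smul_one_sub_sum_conj hQ,
    det_smul_one_sub_sum_of_isUpperTriangular (fun k => hupper k), Finset.prod_eq_zero_iff]
  simp
end

section
/- Let C_0, …, C_{p−1} be d×d real matrices, let M be their companion block matrix, and let E_p denote the pd×d matrix consisting of p−1 zero d×d blocks stacked above an identity block I_d. Then for every nonzero vector v ∈ ℝ^{pd} there exist a vector u ∈ ℝ^d and an integer k with 0 ≤ k ≤ p−1 such that ⟨M^k E_p u, v⟩ ≠ 0. -/
/-- The `pd×d` matrix `E_p = (0_d, …, 0_d, I_d)ᵀ`: `p-1` zero `d×d` blocks stacked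
above an identity block `I_d`. -/
def Emat (p d : ℕ) (R : Type*) [CommRing R] : Matrix (Fin p × Fin d) (Fin d) R :=
  Matrix.of fun x b => if (x.1 : ℕ) + 1 = p ∧ x.2 = b then 1 else 0

lemma key {p d : ℕ} (C : Fin p → Matrix (Fin d) (Fin d) ℝ) (u : Fin d → ℝ) :
    ∀ k, ∀ j : Fin p, ∀ b : Fin d, (j : ℕ) + k + 1 ≤ p →
      (((companion C) ^ k).mulVec ((Emat p d ℝ).mulVec u)) (j, b)
        = if (j : ℕ) + k + 1 = p then u b else 0 := by
  intro k
  induction k with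
  | zero =>
    intro j b h
    rw [pow_zero, Matrix.one_mulVec]
    simp only [Matrix.mulVec, dotProduct, Emat, Matrix.of_apply, ite_and, boole_mul]
    by_cases hp : (j : ℕ) + 1 = p
    · simp [hp, Finset.sum_ite_eq]
    · simp [hp]
  | succ k ih =>
    intro j b h
    have hj1 : (j : ℕ) + 1 < p := by omega
    rw [pow_succ', ← Matrix.mulVec_mulVec]
    set w := ((companion C) ^ k).mulVec ((Emat p d ℝ).mulVec u) with hw
    have : (companion C).mulVec w (j, b) = w (⟨(j : ℕ) + 1, hj1⟩, b) := by
      simp only [Matrix.mulVec, dotProduct, companion, Matrix.of_apply]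
      rw [Fintype.sum_prod_type]
      have hne : ¬ ((j : ℕ) + 1 = p) := by omega
      simp only [hne, if_false]
      rw [Finset.sum_eq_single (⟨(j : ℕ) + 1, hj1⟩ : Fin p)]
      · simp
      · intro l _ hl
        have : ¬ ((l : ℕ) = (j : ℕ) + 1) := fun hc => hl (Fin.ext hc)
        simp [this]
      · simp
    rw [this, ih ⟨(j : ℕ) + 1, hj1⟩ b (by simpa using by omega)]
    simp only []
    congr 1
    simp only [eq_iff_iff]
    omega

theorem stmt_8 {p d : ℕ} (C : Fin p → Matrix (Fin d) (Fin d) ℝ)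
    (v : Fin p × Fin d → ℝ) (hv : v ≠ 0) :
    ∃ (u : Fin d → ℝ) (k : ℕ), k < p ∧
      ∑ x : Fin p × Fin d,
        (((companion C) ^ k).mulVec ((Emat p d ℝ).mulVec u)) x * v x ≠ 0 := by
  have hsne : (Finset.univ.filter (fun x : Fin p × Fin d => v x ≠ 0)).Nonempty := by
    by_contra hc
    apply hv
    funext x
    simp only [Pi.zero_apply]
    by_contra hx
    exact hc ⟨x, by simp [hx]⟩
  set s := Finset.univ.filter (fun x : Fin p × Fin d => v x ≠ 0) with hs
  set i : Fin p := s.sup' hsne (fun x => x.1) with hi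
  obtain ⟨x0, hx0s, hx0⟩ := Finset.exists_mem_eq_sup' hsne (fun x => x.1)
  have hx0v : v x0 ≠ 0 := by simpa [hs] using hx0s
  have hle : ∀ x : Fin p × Fin d, v x ≠ 0 → x.1 ≤ i :=
    fun x hx => Finset.le_sup' (fun y : Fin p × Fin d => y.1) (by simp [hs, hx])
  refine ⟨fun b => v (i, b), p - 1 - (i : ℕ), by omega, ?_⟩
  set k := p - 1 - (i : ℕ) with hk
  have hik : (i : ℕ) + k + 1 = p := by have := i.is_lt; omega
  have hterm : ∀ x : Fin p × Fin d,
      (((companion C) ^ k).mulVec ((Emat p d ℝ).mulVec (fun b => v (i, b)))) x * v x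
        = if x.1 = i then v (i, x.2) * v x else 0 := by
    intro x
    by_cases hx : (x.1 : ℕ) ≤ (i : ℕ)
    · rw [show x = (x.1, x.2) from rfl, key C _ k x.1 x.2 (by omega)]
      by_cases he : x.1 = i
      · simp [he, hik]
      · have : ¬ ((x.1 : ℕ) + k + 1 = p) := by
          intro hc; exact he (Fin.ext (by omega))
        simp [this, he]
    · have hvx : v x = 0 := by
        by_contra hc
        exact hx (hle x hc)
      have : ¬ (x.1 = i) := fun hc => hx (by simp [hc])
      simp [hvx, this]
  rw [Finset.sum_congr rfl (fun x _ => hterm x)]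
  rw [Fintype.sum_prod_type]
  rw [Finset.sum_eq_single i]
  · have : ∑ c : Fin d, v (i, c) * v (i, c) = ∑ c : Fin d, (v (i, c))^2 := by
      simp [sq]
    simp only [if_true]
    rw [this]
    have hpos : 0 < ∑ c : Fin d, (v (i, c))^2 := by
      apply Finset.sum_pos'
      · intro c _; positivity
      · refine ⟨x0.2, Finset.mem_univ _, ?_⟩
        have hx0' : v (i, x0.2) ≠ 0 := by rw [hi, hx0]; exact hx0v
        positivity
    exact ne_of_gt hpos
  · intro l _ hl
    simp [hl]
  · simp
end

section
/- Let C_0, …, C_{p−1} be d×d real matrices, let M be their companion block matrix, and let E_p denote the pd×d matrix consisting of p−1 zero d×d blocks stacked above an identity block I_d. If I_{pd} − M is invertible, then I_d − ∑_{k=0}^{p−1} C_k is invertible and E_p^⊤ (I_{pd} − M)^{-1} E_p = ( I_d − ∑_{k=0}^{p−1} C_k )^{-1}. -/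
variable {R : Type*} [CommRing R]

def stackedOne (p d : ℕ) (R : Type*) [CommRing R] : Matrix (Fin p × Fin d) (Fin d) R :=
  Matrix.of fun x b => (1 : Matrix (Fin d) (Fin d) R) x.2 b

theorem companion_mul_stackedOne {p d : ℕ} (C : Fin p → Matrix (Fin d) (Fin d) R) :
    companion C * stackedOne p d R = stackedOne p d R - Emat p d R * (1 - ∑ k, C k) := by
  ext ⟨i, a⟩ c
  by_cases hi : (i : ℕ) + 1 = p
  · simp [companion, Emat, stackedOne, Matrix.mul_apply, Fintype.sum_prod_type, hi,
      Matrix.sum_apply, Matrix.one_apply]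
  · have hsucc : ∀ j : Fin p, (j : ℕ) = i + 1 ↔ j = ⟨i + 1, by omega⟩ :=
      fun j => by rw [Fin.ext_iff]
    simp [companion, Emat, stackedOne, Matrix.mul_apply, Fintype.sum_prod_type, hi, hsucc]

theorem Emat_transpose_mul_stackedOne {p d : ℕ} (hp : 0 < p) :
    (Emat p d R).transpose * stackedOne p d R = 1 := by
  have hlast : ∀ j : Fin p, (j : ℕ) + 1 = p ↔ j = ⟨p - 1, by omega⟩ := fun j => by
    simp only [Fin.ext_iff]; omega
  ext a b
  simp [Emat, stackedOne, Matrix.mul_apply, Fintype.sum_prod_type, hlast, Matrix.one_apply,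
    ite_and, eq_comm]

theorem Emat_transpose_mul_inv_mul_Emat_mul_one_sub_sum {p d : ℕ} (hp : 0 < p)
    (C : Fin p → Matrix (Fin d) (Fin d) R) (h : IsUnit (1 - companion C)) :
    (Emat p d R).transpose * (1 - companion C)⁻¹ * Emat p d R * (1 - ∑ k, C k) = 1 := by
  have hV : (1 - companion C) * stackedOne p d R = Emat p d R * (1 - ∑ k, C k) := by
    rw [Matrix.sub_mul, companion_mul_stackedOne, Matrix.one_mul, sub_sub_cancel]
  have hdet : IsUnit (1 - companion C).det := (Matrix.isUnit_iff_isUnit_det _).mp h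
  rw [Matrix.mul_assoc _ (Emat p d R), ← hV, Matrix.mul_assoc,
    Matrix.nonsing_inv_mul_cancel_left _ _ hdet,
    Emat_transpose_mul_stackedOne hp]

theorem stmt_9 {p d : ℕ} (hp : 0 < p) (C : Fin p → Matrix (Fin d) (Fin d) ℝ)
    (h : IsUnit (1 - companion C)) :
    IsUnit (1 - ∑ k : Fin p, C k) ∧
    (Emat p d ℝ).transpose * (1 - companion C)⁻¹ * (Emat p d ℝ) =
      (1 - ∑ k : Fin p, C k)⁻¹ := by
  have hinv := Emat_transpose_mul_inv_mul_Emat_mul_one_sub_sum hp C h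
  exact ⟨.of_mul_eq_one_right _ hinv, (Matrix.inv_eq_left_inv hinv).symm⟩
end

section
/- Let p ≥ 1 and let q be a monic polynomial of degree p with complex coefficients. Then ρ(q) ≥ | |q(1)|^{1/p} − 1 |. In particular, if q has real coefficients and q(1) ≥ 0 then ρ(q) ≥ | q(1)^{1/p} − 1 |. -/
/-- The spectral radius of a complex polynomial: the maximum modulus of its
complex roots. -/
noncomputable def polyRad (q : Polynomial ℂ) : ℝ :=
  sSup ((fun z : ℂ => ‖z‖) '' {z : ℂ | q.IsRoot z})

/-!
Over ℂ a monic `q` of degree `n` factors as `∏ (X - a)` over its roots, so `‖q x‖ = ∏ ‖x - a‖`.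
If every root has modulus at most `R`, each factor lies in `[‖x‖ - R, ‖x‖ + R]`, hence
`(‖x‖ - R)^n ≤ ‖q x‖ ≤ (‖x‖ + R)^n`; taking `n`-th roots gives `|‖q x‖^(1/n) - ‖x‖| ≤ R`.
-/

open Polynomial

namespace Polynomial

variable {K : Type*} [NormedField K] {q : K[X]}

theorem Splits.norm_eval_eq_prod_roots (hq : q.Splits) (hm : q.Monic) (x : K) :
    ‖q.eval x‖ = (q.roots.map fun a => ‖x - a‖).prod := by
  rw [hq.eval_eq_prod_roots_of_monic hm, ← normHom_apply, map_multiset_prod, Multiset.map_map]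
  rfl

theorem Splits.norm_eval_le_pow (hq : q.Splits) (hm : q.Monic) {R : ℝ}
    (hR : ∀ a ∈ q.roots, ‖a‖ ≤ R) (x : K) :
    ‖q.eval x‖ ≤ (‖x‖ + R) ^ q.natDegree := by
  calc ‖q.eval x‖ ≤ (q.roots.map fun _ => ‖x‖ + R).prod := by
        rw [hq.norm_eval_eq_prod_roots hm]
        exact Multiset.prod_map_le_prod_map₀ _ _ (fun _ _ => norm_nonneg _)
          fun a ha => (norm_sub_le x a).trans (by linarith [hR a ha])
    _ = (‖x‖ + R) ^ q.natDegree := by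
        simp [Multiset.map_const', hq.natDegree_eq_card_roots]

theorem Splits.pow_le_norm_eval (hq : q.Splits) (hm : q.Monic) {R : ℝ}
    (hR : ∀ a ∈ q.roots, ‖a‖ ≤ R) {x : K} (hx : R ≤ ‖x‖) :
    (‖x‖ - R) ^ q.natDegree ≤ ‖q.eval x‖ := by
  calc (‖x‖ - R) ^ q.natDegree = (q.roots.map fun _ => ‖x‖ - R).prod := by
        simp [Multiset.map_const', hq.natDegree_eq_card_roots]
    _ ≤ ‖q.eval x‖ := by
        rw [hq.norm_eval_eq_prod_roots hm]
        exact Multiset.prod_map_le_prod_map₀ _ _ (fun _ _ => sub_nonneg.2 hx)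
          fun a ha => (sub_le_sub_left (hR a ha) _).trans (norm_sub_norm_le x a)

end Polynomial

theorem norm_le_polyRad_of_mem_roots {q : ℂ[X]} {a : ℂ} (ha : a ∈ q.roots) :
    ‖a‖ ≤ polyRad q := by
  have hq : q ≠ 0 := ne_zero_of_mem_roots ha
  exact le_csSup ((finite_setOfPred_isRoot hq).image _).bddAbove ⟨a, (mem_roots hq).1 ha, rfl⟩

theorem polyRad_nonneg (q : ℂ[X]) : 0 ≤ polyRad q :=
  Real.sSup_nonneg (by rintro _ ⟨z, -, rfl⟩; exact norm_nonneg z)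

theorem abs_norm_eval_rpow_sub_norm_le_polyRad {q : ℂ[X]} (hm : q.Monic)
    (hd : 0 < q.natDegree) (x : ℂ) :
    |‖q.eval x‖ ^ (1 / (q.natDegree : ℝ)) - ‖x‖| ≤ polyRad q := by
  have hq : q.Splits := IsAlgClosed.splits q
  have hR : ∀ a ∈ q.roots, ‖a‖ ≤ polyRad q := fun _ => norm_le_polyRad_of_mem_roots
  have hn : (0 : ℝ) < q.natDegree := Nat.cast_pos.2 hd
  rw [abs_sub_le_iff]
  constructor
  · rw [sub_le_iff_le_add', one_div, Real.rpow_inv_le_iff_of_pos (norm_nonneg _)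
      (add_nonneg (norm_nonneg x) (polyRad_nonneg q)) hn, Real.rpow_natCast]
    exact hq.norm_eval_le_pow hm hR x
  · rcases le_or_gt (polyRad q) ‖x‖ with hx | hx
    · rw [sub_le_comm, one_div, Real.le_rpow_inv_iff_of_pos (sub_nonneg.2 hx) (norm_nonneg _) hn,
        Real.rpow_natCast]
      exact hq.pow_le_norm_eval hm hR hx
    · linarith [Real.rpow_nonneg (norm_nonneg (q.eval x)) (1 / (q.natDegree : ℝ))]

theorem stmt_12 (p : ℕ) (hp : 1 ≤ p) :
    (∀ q : Polynomial ℂ, q.Monic → q.natDegree = p →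
      |(‖q.eval 1‖) ^ (1 / (p : ℝ)) - 1| ≤ polyRad q) ∧
    (∀ q : Polynomial ℝ, q.Monic → q.natDegree = p → 0 ≤ q.eval 1 →
      |(q.eval 1) ^ (1 / (p : ℝ)) - 1| ≤ polyRad (q.map (algebraMap ℝ ℂ))) := by
  refine ⟨fun q hm hd => ?_, fun q hm hd h0 => ?_⟩
  · simpa [hd] using abs_norm_eval_rpow_sub_norm_le_polyRad hm (hd ▸ hp) 1
  · have hd' : (q.map (algebraMap ℝ ℂ)).natDegree = p := by rwa [natDegree_map]
    simpa [hd', eval_map, abs_of_nonneg h0] using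
      abs_norm_eval_rpow_sub_norm_le_polyRad (hm.map (algebraMap ℝ ℂ)) (hd' ▸ hp) 1
end

section
/- Let p ≥ 1, let 0 < μ < L be real numbers, set Q = L/μ, and let ν ∈ ℝ. Suppose s_μ and s_L are monic polynomials of degree p with real coefficients satisfying s_μ(1) = −ν·μ and s_L(1) = −ν·L. Then max{ ρ(s_μ), ρ(s_L) } ≥ (Q^{1/p} − 1) / (Q^{1/p} + 1). -/
open Polynomial

theorem norm_multiset_prod {K : Type*} [NormedField K] (m : Multiset K) :
    ‖m.prod‖ = (m.map (‖·‖)).prod :=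
  map_multiset_prod (normHom : K →*₀ ℝ) m

namespace Polynomial

variable {K : Type*} [NormedField K] {q : K[X]} {r : ℝ}

theorem Splits.norm_eval_le_of_monic (hs : q.Splits) (hm : q.Monic)
    (hr : ∀ z ∈ q.roots, ‖z‖ ≤ r) (w : K) :
    ‖q.eval w‖ ≤ (‖w‖ + r) ^ q.natDegree := by
  rw [hs.eval_eq_prod_roots_of_monic hm, hs.natDegree_eq_card_roots, norm_multiset_prod,
    Multiset.map_map, ← Multiset.prod_replicate, ← Multiset.map_const']
  exact Multiset.prod_map_le_prod_map₀ _ _ (fun _ _ => norm_nonneg _)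
    fun z hz => (norm_sub_le w z).trans (add_le_add_right (hr z hz) _)

theorem Splits.pow_le_norm_eval_of_monic (hs : q.Splits) (hm : q.Monic)
    (hr : ∀ z ∈ q.roots, ‖z‖ ≤ r) {w : K} (hrw : r ≤ ‖w‖) :
    (‖w‖ - r) ^ q.natDegree ≤ ‖q.eval w‖ := by
  rw [hs.eval_eq_prod_roots_of_monic hm, hs.natDegree_eq_card_roots, norm_multiset_prod,
    Multiset.map_map, ← Multiset.prod_replicate, ← Multiset.map_const']
  exact Multiset.prod_map_le_prod_map₀ _ _ (fun _ _ => sub_nonneg.mpr hrw)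
    fun z hz => (sub_le_sub_left (hr z hz) _).trans (norm_sub_norm_le w z)

end Polynomial

theorem norm_le_polyRad {q : ℂ[X]} (hq : q ≠ 0) {z : ℂ} (hz : z ∈ q.roots) :
    ‖z‖ ≤ polyRad q :=
  le_csSup ((finite_setOfPred_isRoot hq).image _).bddAbove ⟨z, (mem_roots hq).mp hz, rfl⟩

theorem rpow_inv_natCast_sub_one_div_add_one_le {p : ℕ} (hp : p ≠ 0) {Q r : ℝ} (hQ : 0 ≤ Q)
    (hr0 : 0 ≤ r) (hr : r < 1) (h : Q * (1 - r) ^ p ≤ (1 + r) ^ p) :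
    (Q ^ (1 / (p : ℝ)) - 1) / (Q ^ (1 / (p : ℝ)) + 1) ≤ r := by
  have h1r : 0 < 1 - r := by linarith
  have hx0 : 0 ≤ Q ^ (1 / (p : ℝ)) := Real.rpow_nonneg hQ _
  have hx : Q ^ (1 / (p : ℝ)) * (1 - r) ≤ 1 + r := by
    have hp' : (0 : ℝ) < p := by exact_mod_cast Nat.pos_of_ne_zero hp
    rwa [← le_div_iff₀ h1r, one_div, Real.rpow_inv_le_iff_of_pos hQ (by positivity) hp',
      Real.rpow_natCast, div_pow, le_div_iff₀ (by positivity)]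
  rw [div_le_iff₀ (by linarith)]
  linarith

theorem norm_eval_one_map_complex (s : ℝ[X]) :
    ‖(s.map (algebraMap ℝ ℂ)).eval 1‖ = |s.eval 1| := by
  rw [eval_one_map, Complex.coe_algebraMap, Complex.norm_real, Real.norm_eq_abs]

theorem stmt_14 (p : ℕ) (hp : 1 ≤ p) (μ L ν : ℝ) (hμ : 0 < μ) (hμL : μ < L)
    (sμ sL : Polynomial ℝ)
    (hmμ : sμ.Monic) (hdμ : sμ.natDegree = p)
    (hmL : sL.Monic) (hdL : sL.natDegree = p)
    (h1μ : sμ.eval 1 = -ν * μ) (h1L : sL.eval 1 = -ν * L) :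
    ((L / μ) ^ (1 / (p : ℝ)) - 1) / ((L / μ) ^ (1 / (p : ℝ)) + 1) ≤
      max (polyRad (sμ.map (algebraMap ℝ ℂ)))
          (polyRad (sL.map (algebraMap ℝ ℂ))) := by
  set r := max (polyRad (sμ.map (algebraMap ℝ ℂ))) (polyRad (sL.map (algebraMap ℝ ℂ)))
  have hQ : 0 ≤ L / μ := div_nonneg (hμ.trans hμL).le hμ.le
  rcases lt_or_ge r 1 with hr1 | hr1
  · have hroots {s : ℝ[X]} (hs : s.Monic) (hsr : polyRad (s.map (algebraMap ℝ ℂ)) ≤ r) :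
        ∀ z ∈ (s.map (algebraMap ℝ ℂ)).roots, ‖z‖ ≤ r :=
      fun z hz => (norm_le_polyRad (hs.map _).ne_zero hz).trans hsr
    have hlow := (IsAlgClosed.splits _).pow_le_norm_eval_of_monic (hmμ.map _)
      (hroots hmμ (le_max_left _ _)) (w := 1) (by simpa using hr1.le)
    have hup := (IsAlgClosed.splits _).norm_eval_le_of_monic (hmL.map _)
      (hroots hmL (le_max_right _ _)) 1
    rw [norm_one, norm_eval_one_map_complex, hmμ.natDegree_map, hdμ, h1μ, abs_mul, abs_neg,
      abs_of_pos hμ] at hlow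
    rw [norm_one, norm_eval_one_map_complex, hmL.natDegree_map, hdL, h1L, abs_mul, abs_neg,
      abs_of_pos (hμ.trans hμL)] at hup
    refine rpow_inv_natCast_sub_one_div_add_one_le (by omega) hQ
      ((polyRad_nonneg _).trans (le_max_left _ _)) hr1 ?_
    calc L / μ * (1 - r) ^ p ≤ L / μ * (|ν| * μ) := by gcongr
      _ = |ν| * L := by field_simp
      _ ≤ (1 + r) ^ p := hup
  · have hx := Real.rpow_nonneg hQ (1 / (p : ℝ))
    rw [div_le_iff₀ (by linarith)]
    nlinarith
end

section
/- Let p ≥ 1, let 0 < μ < L be real numbers, and set Q = L/μ and ν* = −( 2 / (L^{1/p} + μ^{1/p}) )^p. Then for every real ν < 0, max{ | (−ν L)^{1/p} − 1 |, | (−ν μ)^{1/p} − 1 | } ≥ (Q^{1/p} − 1) / (Q^{1/p} + 1), with equality if and only if ν = ν*; in particular, (−ν* L)^{1/p} − 1 = 1 − (−ν* μ)^{1/p} = (Q^{1/p} − 1)/(Q^{1/p} + 1). -/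
lemma key_strict (a b t : ℝ) (ha : 0 < a) (hab : a < b) (ht : 0 < t)
    (htne : t ≠ 2 / (b + a)) :
    (b - a) / (b + a) < max |t * b - 1| |t * a - 1| := by
  have hb : 0 < b := ha.trans hab
  have hba : 0 < b + a := by linarith
  rcases lt_or_gt_of_ne htne with h | h
  · have h2 : t * (b + a) < 2 := (lt_div_iff₀ hba).mp h
    have key1 : (b - a) / (b + a) < 1 - t * a := by
      rw [div_lt_iff₀ hba]; nlinarith
    calc (b - a) / (b + a) < 1 - t * a := key1
      _ = -(t * a - 1) := by ring
      _ ≤ |t * a - 1| := neg_le_abs _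
      _ ≤ max |t * b - 1| |t * a - 1| := le_max_right _ _
  · have h2 : 2 < t * (b + a) := (div_lt_iff₀ hba).mp h
    have key1 : (b - a) / (b + a) < t * b - 1 := by
      rw [div_lt_iff₀ hba]; nlinarith
    calc (b - a) / (b + a) < t * b - 1 := key1
      _ ≤ |t * b - 1| := le_abs_self _
      _ ≤ max |t * b - 1| |t * a - 1| := le_max_left _ _

theorem stmt_15 (p : ℕ) (hp : 1 ≤ p) (μ L : ℝ) (hμ : 0 < μ) (hμL : μ < L) :
    let Q : ℝ := L / μ
    let νs : ℝ := -(2 / (L ^ (1 / (p : ℝ)) + μ ^ (1 / (p : ℝ)))) ^ p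
    (∀ ν : ℝ, ν < 0 →
      (Q ^ (1 / (p : ℝ)) - 1) / (Q ^ (1 / (p : ℝ)) + 1) ≤
        max |(-ν * L) ^ (1 / (p : ℝ)) - 1| |(-ν * μ) ^ (1 / (p : ℝ)) - 1| ∧
      (max |(-ν * L) ^ (1 / (p : ℝ)) - 1| |(-ν * μ) ^ (1 / (p : ℝ)) - 1| =
          (Q ^ (1 / (p : ℝ)) - 1) / (Q ^ (1 / (p : ℝ)) + 1) ↔ ν = νs)) ∧
    ((-νs * L) ^ (1 / (p : ℝ)) - 1 = 1 - (-νs * μ) ^ (1 / (p : ℝ)) ∧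
     (-νs * L) ^ (1 / (p : ℝ)) - 1 =
        (Q ^ (1 / (p : ℝ)) - 1) / (Q ^ (1 / (p : ℝ)) + 1)) := by
  have hL : (0:ℝ) < L := hμ.trans hμL
  have hp0 : (0:ℝ) < (p:ℝ) := by exact_mod_cast Nat.pos_of_ne_zero (by omega)
  have hip : (0:ℝ) < 1 / (p:ℝ) := by positivity
  set a := μ ^ (1 / (p:ℝ)) with ha_def
  set b := L ^ (1 / (p:ℝ)) with hb_def
  have ha : 0 < a := Real.rpow_pos_of_pos hμ _
  have hb : 0 < b := Real.rpow_pos_of_pos hL _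
  have hab : a < b := Real.rpow_lt_rpow hμ.le hμL hip
  have hba : 0 < b + a := by linarith
  intro Q νs
  set c := 2 / (b + a) with hc_def
  have hc : (0:ℝ) < c := by rw [hc_def]; positivity
  have hνs_eq : νs = -c ^ p := rfl
  have hνs' : -νs = c ^ p := by rw [hνs_eq]; ring
  have hcp : ((c ^ p : ℝ)) ^ (1 / (p:ℝ)) = c := by
    rw [← Real.rpow_natCast c p, ← Real.rpow_mul hc.le, mul_one_div,
      div_self hp0.ne', Real.rpow_one]
  have hQ : Q ^ (1 / (p:ℝ)) = b / a := by
    show (L / μ) ^ (1 / (p:ℝ)) = b / a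
    rw [ha_def, hb_def, Real.div_rpow hL.le hμ.le]
  have hr : (b / a - 1) / (b / a + 1) = (b - a) / (b + a) := by
    rw [div_eq_div_iff (by positivity) hba.ne']
    field_simp
  have e1 : c * b - 1 = (b - a) / (b + a) := by
    rw [hc_def, eq_div_iff hba.ne']; field_simp; ring
  have e2 : c * a - 1 = -((b - a) / (b + a)) := by
    rw [hc_def]
    field_simp
    ring
  have hrpos : 0 < (b - a) / (b + a) := div_pos (by linarith) hba
  constructor
  · intro ν hν
    have hν' : (0:ℝ) < -ν := by linarith
    set t := (-ν) ^ (1 / (p:ℝ)) with ht_def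
    have ht : 0 < t := Real.rpow_pos_of_pos hν' _
    have hL' : (-ν * L) ^ (1 / (p:ℝ)) = t * b := by
      rw [Real.mul_rpow hν'.le hL.le]
    have hμ' : (-ν * μ) ^ (1 / (p:ℝ)) = t * a := by
      rw [Real.mul_rpow hν'.le hμ.le]
    have htp : t ^ p = -ν := by
      rw [ht_def, ← Real.rpow_natCast ((-ν) ^ (1 / (p:ℝ))) p,
        ← Real.rpow_mul hν'.le, one_div, inv_mul_cancel₀ hp0.ne',
        Real.rpow_one]
    have htν : t = c ↔ ν = νs := by
      constructor
      · intro h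
        have hν2 : ν = -(t ^ p) := by rw [htp]; ring
        rw [hν2, h]
      · intro h
        rw [ht_def, h]
        show (-νs) ^ (1 / (p:ℝ)) = c
        rw [hνs', hcp]
    rw [hL', hμ', hQ, hr]
    by_cases hte : t = c
    · rw [hte, e1, e2, abs_neg, abs_of_pos hrpos, max_self]
      exact ⟨le_rfl, iff_of_true rfl (htν.mp hte)⟩
    · have hlt := key_strict a b t ha hab ht (by rw [← hc_def]; exact hte)
      exact ⟨hlt.le, iff_of_false hlt.ne' (fun h => hte (htν.mpr h))⟩
  · have hνsnn : (0:ℝ) ≤ -νs := by rw [hνs']; positivity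
    have hcs : (-νs) ^ (1 / (p:ℝ)) = c := by rw [hνs', hcp]
    have hνsL : (-νs * L) ^ (1 / (p:ℝ)) = c * b := by
      rw [Real.mul_rpow hνsnn hL.le, hcs]
    have hνsμ : (-νs * μ) ^ (1 / (p:ℝ)) = c * a := by
      rw [Real.mul_rpow hνsnn hμ.le, hcs]
    refine ⟨?_, ?_⟩
    · rw [hνsL, hνsμ, e1]
      have := e2
      linarith
    · rw [hνsL, hQ, hr, e1]
end

section
/- Let 0 < μ < L be real numbers, let B be the 2×2 real matrix with diagonal entries (L+μ)/2 and off-diagonal entries (L−μ)/2, let N = diag(α, β) for real α, β, and set ν = (α+β)/2. If ν ≤ 0, then the larger eigenvalue λ₁ = −(α+β)(L+μ)/4 + √( ((α+β)(L+μ)/4)² − αβLμ ) of −N·B satisfies λ₁ ≥ −ν·L, and the smaller eigenvalue λ₂ = −(α+β)(L+μ)/4 − √( ((α+β)(L+μ)/4)² − αβLμ ) satisfies λ₂ ≤ −ν·μ. -/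
theorem stmt_17 (μ L α β : ℝ) (hμ : 0 < μ) (hμL : μ < L)
    (hν : (α + β) / 2 ≤ 0) :
    -((α + β) / 2) * L ≤
      -((α + β) * (L + μ) / 4) +
        Real.sqrt (((α + β) * (L + μ) / 4) ^ 2 - α * β * L * μ) ∧
    -((α + β) * (L + μ) / 4) -
        Real.sqrt (((α + β) * (L + μ) / 4) ^ 2 - α * β * L * μ) ≤
      -((α + β) / 2) * μ := by
  have hr : 0 ≤ (α + β) * (μ - L) / 4 := by nlinarith
  have key : (α + β) * (μ - L) / 4 ≤
      Real.sqrt (((α + β) * (L + μ) / 4) ^ 2 - α * β * L * μ) := by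
    rw [show (((α + β) * (L + μ) / 4) ^ 2 - α * β * L * μ)
        = ((α + β) * (μ - L) / 4) ^ 2 + (α - β) ^ 2 * (L * μ) / 4 by ring]
    calc (α + β) * (μ - L) / 4
        = Real.sqrt (((α + β) * (μ - L) / 4) ^ 2) := by
          rw [Real.sqrt_sq hr]
      _ ≤ _ := by
          apply Real.sqrt_le_sqrt
          nlinarith [sq_nonneg (α - β), mul_pos (hμ.trans hμL) hμ]
  constructor <;> nlinarith [key, hr]
end

section
/- Let n ≥ 2 be an integer and λ > 0 a real number. For i = 1, …, n let u_i ∈ ℝ^n be the vector with i-th entry 1 and all other entries 2/(2+λn), and define the n×n real matrix E = I_n − (1/n) ∑_{i=1}^n e_i u_i^⊤, where e_i are the standard basis vectors. Then: (i) E v = (1 − 1/(2/λ + n)) v for every v ∈ ℝ^n orthogonal to the all-ones vector 𝟙; (ii) E 𝟙 = (1 − (2+λ)/(2+λn)) 𝟙; and consequently (iii) for α⁰ = (1/√2)(e₁ − e₂), ‖E^K α⁰‖ = (1 − 1/(2/λ + n))^K for every K ∈ ℕ. -/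
/-- The Euclidean norm on `ℝ^n`. -/
noncomputable def rnorm {n : ℕ} (v : Fin n → ℝ) : ℝ :=
  Real.sqrt (∑ i, (v i) ^ 2)

theorem stmt_18 (n : ℕ) (hn : 2 ≤ n) (lam : ℝ) (hlam : 0 < lam) :
    let u : Fin n → Fin n → ℝ := fun i j => if j = i then 1 else 2 / (2 + lam * n)
    let E : Matrix (Fin n) (Fin n) ℝ :=
      1 - (1 / (n : ℝ)) • ∑ i : Fin n, Matrix.vecMulVec (Pi.single i 1) (u i)
    (∀ v : Fin n → ℝ, ∑ j, v j = 0 →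
        E.mulVec v = (1 - 1 / (2 / lam + n)) • v) ∧
    (E.mulVec (fun _ => 1) =
        (1 - (2 + lam) / (2 + lam * n)) • (fun _ => (1 : ℝ))) ∧
    (∀ K : ℕ,
      rnorm ((E ^ K).mulVec
          (fun j : Fin n =>
            if j = (⟨0, by omega⟩ : Fin n) then (Real.sqrt 2)⁻¹
            else if j = (⟨1, by omega⟩ : Fin n) then -(Real.sqrt 2)⁻¹ else 0)) =
        (1 - 1 / (2 / lam + n)) ^ K) := by
  intro u E
  have hn0 : (0:ℝ) < n := by
    have : (2:ℝ) ≤ n := by exact_mod_cast hn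
    linarith
  have hden : (0:ℝ) < 2 + lam * n := by positivity
  set c : ℝ := 2 / (2 + lam * n) with hc
  -- entries of E
  have hE : ∀ i j, E i j = (if i = j then 1 else 0) - (1/(n:ℝ)) * u i j := by
    intro i j
    simp only [E, Matrix.sub_apply, Matrix.one_apply, Matrix.smul_apply,
      Matrix.sum_apply, Matrix.vecMulVec_apply, Pi.single_apply, smul_eq_mul]
    congr 1
    rw [Finset.sum_congr rfl (fun k _ => by rw [ite_mul, one_mul, zero_mul]),
      Finset.sum_ite_eq Finset.univ i (fun k => u k j)]
    simp
  -- key mulVec formula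
  have hmul : ∀ (v : Fin n → ℝ) (i : Fin n),
      E.mulVec v i = v i - (1/(n:ℝ)) * ((1 - c) * v i + c * ∑ j, v j) := by
    intro v i
    have h1 : ∀ j, u i j * v j = c * v j + (if j = i then (1 - c) * v j else 0) := by
      intro j
      simp only [u]
      split <;> ring
    calc E.mulVec v i
        = ∑ j, ((if i = j then v j else 0)
            - (1/(n:ℝ)) * (c * v j + if j = i then (1 - c) * v j else 0)) := by
          simp only [Matrix.mulVec, dotProduct]
          refine Finset.sum_congr rfl fun j _ => ?_
          rw [hE, sub_mul, mul_assoc, h1]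
          by_cases hij : i = j
          · subst hij; simp
          · rw [if_neg hij, if_neg hij, if_neg (Ne.symm hij), zero_mul]
      _ = (∑ j, if i = j then v j else 0)
            - (1/(n:ℝ)) * ∑ j, (c * v j + if j = i then (1 - c) * v j else 0) := by
          rw [Finset.mul_sum, ← Finset.sum_sub_distrib]
      _ = v i - (1/(n:ℝ)) * ((1 - c) * v i + c * ∑ j, v j) := by
          rw [Finset.sum_ite_eq Finset.univ i v, Finset.sum_add_distrib,
            Finset.sum_ite_eq' Finset.univ i (fun j => (1 - c) * v j), ← Finset.mul_sum]
          simp only [Finset.mem_univ, if_true]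
          ring
  have hlamn : lam ≠ 0 := ne_of_gt hlam
  have hdne : (2 + lam * n) ≠ 0 := ne_of_gt hden
  have hnne : (n:ℝ) ≠ 0 := ne_of_gt hn0
  set r : ℝ := 1 - 1 / (2 / lam + n) with hr
  have hr' : r = 1 - (1/(n:ℝ)) * (1 - c) := by
    rw [hr, hc]
    field_simp
    ring
  have part1 : ∀ v : Fin n → ℝ, ∑ j, v j = 0 → E.mulVec v = r • v := by
    intro v hv
    funext i
    rw [hmul, hv]
    simp [hr']
    ring
  refine ⟨part1, ?_, ?_⟩
  · funext i
    rw [hmul]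
    simp only [Finset.sum_const, Finset.card_univ, Fintype.card_fin, nsmul_eq_mul,
      mul_one, Pi.smul_apply, smul_eq_mul]
    rw [hc]
    field_simp
    ring
  · intro K
    set a0 : Fin n → ℝ := fun j : Fin n =>
      if j = (⟨0, by omega⟩ : Fin n) then (Real.sqrt 2)⁻¹
      else if j = (⟨1, by omega⟩ : Fin n) then -(Real.sqrt 2)⁻¹ else 0 with ha0
    have hne : (⟨0, by omega⟩ : Fin n) ≠ (⟨1, by omega⟩ : Fin n) := by
      simp [Fin.ext_iff]
    have hsum : ∑ j, a0 j = 0 := by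
      have : ∀ j, a0 j = (if j = (⟨0, by omega⟩ : Fin n) then (Real.sqrt 2)⁻¹ else 0)
          + (if j = (⟨1, by omega⟩ : Fin n) then -(Real.sqrt 2)⁻¹ else 0) := by
        intro j
        simp only [ha0]
        by_cases h0 : j = (⟨0, by omega⟩ : Fin n)
        · subst h0; simp [hne]
        · by_cases h1 : j = (⟨1, by omega⟩ : Fin n) <;> simp [h0, h1]
      rw [Finset.sum_congr rfl (fun j _ => this j), Finset.sum_add_distrib,
        Finset.sum_ite_eq' Finset.univ _ (fun _ => (Real.sqrt 2)⁻¹),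
        Finset.sum_ite_eq' Finset.univ _ (fun _ => -(Real.sqrt 2)⁻¹)]
      simp
    -- (E^K).mulVec a0 = r^K • a0
    have hpow : ∀ K : ℕ, (E ^ K).mulVec a0 = (r ^ K) • a0 := by
      intro K
      induction K with
      | zero => simp
      | succ k ih =>
        rw [pow_succ', ← Matrix.mulVec_mulVec, ih, Matrix.mulVec_smul,
          part1 a0 hsum, smul_smul, ← pow_succ]
    have hrnn : 0 ≤ r := by
      rw [hr]
      have h2 : (1:ℝ) ≤ 2 / lam + n := by
        have : (2:ℝ) ≤ n := by exact_mod_cast hn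
        have : (0:ℝ) < 2 / lam := by positivity
        linarith
      have h3 : 1 / (2 / lam + (n:ℝ)) ≤ 1 := by
        rw [div_le_one (by positivity)]; exact h2
      linarith
    have hsq : ∀ j, (a0 j) ^ 2 = (if j = (⟨0, by omega⟩ : Fin n) then (1:ℝ)/2 else 0)
        + (if j = (⟨1, by omega⟩ : Fin n) then (1:ℝ)/2 else 0) := by
      intro j
      have h2 : ((Real.sqrt 2)⁻¹) ^ 2 = 1/2 := by
        rw [inv_pow, Real.sq_sqrt (by norm_num : (0:ℝ) ≤ 2)]; norm_num
      simp only [ha0]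
      by_cases h0 : j = (⟨0, by omega⟩ : Fin n)
      · subst h0; simp [hne, h2]
      · by_cases h1 : j = (⟨1, by omega⟩ : Fin n) <;> simp [h0, h1, h2]
    rw [hpow K, rnorm]
    have : ∑ j, ((r ^ K) • a0) j ^ 2 = (r ^ K) ^ 2 * ∑ j, (a0 j) ^ 2 := by
      rw [Finset.mul_sum]
      congr 1; ext j
      simp [mul_pow]
      try norm_num
    rw [this]
    have hsum2 : ∑ j, (a0 j) ^ 2 = 1 := by
      rw [Finset.sum_congr rfl (fun j _ => hsq j), Finset.sum_add_distrib,
        Finset.sum_ite_eq' Finset.univ _ (fun _ => (1:ℝ)/2),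
        Finset.sum_ite_eq' Finset.univ _ (fun _ => (1:ℝ)/2)]
      norm_num
    rw [hsum2, mul_one, Real.sqrt_sq (by positivity)]
end
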